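/- Conversely, let C be a conjunction of linear inequalities with matrix M and vector v as above, and let G_1,…,G_s be the connected components of the dependency graph of C. If z ∈ ℕ^n satisfies M z ≤ v, then the substitution φ_z mapping α_i to s^{z_i} β_{c_i}, where c_i is the index of the component containing α_i and β_1,…,β_s are fresh distinct variables, is a linear solution of C. Moreover, if z ≤ z' componentwise, then φ_z ≤_A φ_{z'} pointwise on the variables of C. -/

import Mathlib

/-- Size expressions of the size algebra A: a ::= α | s a | ∞. -/
inductive SExpr : Type
  | var : ℕ → SExpr
  | s : SExpr → SExpr
  | infty : SExpr
deriving DecidableEq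

/-- The quasi-ordering ≤_A on size expressions. -/
inductive SLe : SExpr → SExpr → Prop
  | refl (a) : SLe a a
  | trans {a b c} : SLe a b → SLe b c → SLe a c
  | mon {a b} : SLe a b → SLe (.s a) (.s b)
  | succ {a b} : SLe a b → SLe a (.s b)
  | infty (a) : SLe a .infty

/-- Normal form w.r.t. the rewrite rule s∞ → ∞. -/
def nf : SExpr → SExpr
  | .var α => .var α
  | .infty => .infty
  | .s a =>
    match nf a with
    | .infty => .infty
    | b => .s b

/-- Action of a size substitution on size expressions. -/
def subst (φ : ℕ → SExpr) : SExpr → SExpr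
  | .var α => φ α
  | .s a => .s (subst φ a)
  | .infty => .infty

theorem SLe.iterate_s_of_le {a b : ℕ} (h : a ≤ b) (x : SExpr) :
    SLe (SExpr.s^[a] x) (SExpr.s^[b] x) := by
  induction b, h using Nat.le_induction with
  | base => exact .refl _
  | succ b _ ih =>
    rw [Function.iterate_succ_apply']
    exact .succ ih

theorem dotProduct_eq_sub_of_eq_ite {ι R : Type*} [Fintype ι] [DecidableEq ι] [Ring R]
    {r : ι → R} (w : ι → R) {a b : ι} (hab : a ≠ b)
    (hr : ∀ l, r l = if l = a then 1 else if l = b then -1 else 0) :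
    r ⬝ᵥ w = w a - w b := by
  have hr' : r = Pi.single a 1 - Pi.single b 1 := by
    ext l
    rw [hr]
    rcases eq_or_ne l a with rfl | hla
    · simp [hab]
    · rcases eq_or_ne l b with rfl | hlb <;> simp [*]
  rw [hr', sub_dotProduct, single_dotProduct, single_dotProduct, one_mul, one_mul]

/-- Conversely, from a nonnegative integer vector z with M z ≤ v one gets a
linear solution φ_z mapping α_l to s^{z l} β_{c l}, where the base variables β
are constant exactly on the connected components of the dependency graph;
moreover φ_z is monotone in z. -/
theorem vector_to_linear_solution {K n : ℕ}
    (j k : Fin K → Fin n) (p q : Fin K → ℕ)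
    (hjk : ∀ i, j i ≠ k i)
    (M : Matrix (Fin K) (Fin n) ℚ) (v : Fin K → ℚ)
    (hM : ∀ i l, M i l = if l = j i then 1 else if l = k i then -1 else 0)
    (hv : ∀ i, v i = (q i : ℚ) - (p i : ℚ))
    (z : Fin n → ℕ)
    (hz : ∀ i, M.mulVec (fun l => (z l : ℚ)) i ≤ v i)
    (β : Fin n → ℕ)
    (hβ : ∀ l m, β l = β m ↔
      Relation.EqvGen (fun l m => ∃ i, j i = l ∧ k i = m) l m) :
    (∀ i, SLe (SExpr.s^[p i] (SExpr.s^[z (j i)] (.var (β (j i)))))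
              (SExpr.s^[q i] (SExpr.s^[z (k i)] (.var (β (k i)))))) ∧
    (∀ z' : Fin n → ℕ, (∀ l, z l ≤ z' l) →
      ∀ l, SLe (SExpr.s^[z l] (.var (β l))) (SExpr.s^[z' l] (.var (β l)))) := by
  refine ⟨fun i => ?_, fun z' hzz' l => SLe.iterate_s_of_le (hzz' l) _⟩
  have hβi : β (j i) = β (k i) := (hβ _ _).2 (.rel _ _ ⟨i, rfl, rfl⟩)
  have hrow : M.mulVec (fun l => (z l : ℚ)) i = z (j i) - z (k i) :=
    dotProduct_eq_sub_of_eq_ite _ (hjk i) (hM i)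
  have hle : p i + z (j i) ≤ q i + z (k i) := by
    have hzi := hz i
    rw [hrow, hv] at hzi
    exact_mod_cast (by push_cast; linarith : ((p i + z (j i) : ℕ) : ℚ) ≤ (q i + z (k i) : ℕ))
  rw [hβi, ← Function.iterate_add_apply, ← Function.iterate_add_apply]
  exact SLe.iterate_s_of_le hle _
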